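/- Every nonempty A ⊆ ℕ has an inverse for ⊕: defining A' = {x ∈ A : stretch(A, x) is odd} ∪ {y ∈ ℕ \ A : y > 0 and stretch(A, y−1) is odd}, one has A ⊕ A' = ∅. -/

import Mathlib

open scoped symmDiff

def shift (A : Set ℕ) : Set ℕ := (· + 1) '' A

def kplus (A B : Set ℕ) : Set ℕ := (A ∆ B) ∆ shift (A ∩ B)

open Classical in
noncomputable def stretch (A : Set ℕ) (n : ℕ) : ℕ :=
  if n ∈ A then sSup {k | k ≤ n ∧ Set.Icc (n - k) n ⊆ A} + 1 else 0

noncomputable def inv' (A : Set ℕ) : Set ℕ :=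
  {x ∈ A | Odd (stretch A x)} ∪ {y | y ∉ A ∧ y > 0 ∧ Odd (stretch A (y - 1))}

/-!
`stretch A` obeys the recursion `stretch A 0 = [0 ∈ A]` and
`stretch A (m + 1) = if m + 1 ∈ A then stretch A m + 1 else 0`. Hence for `m + 1 ∈ A`,
membership of `m + 1` in `inv' A` is decided by the parity of `stretch A m + 1`, and for
`m + 1 ∉ A` by that of `stretch A m`; either way `m + 1 ∈ A ∆ inv' A` exactly when
`stretch A m` is odd, i.e. when `m ∈ A ∩ inv' A`. So `A ∆ inv' A = shift (A ∩ inv' A)`,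
and `kplus A (inv' A)` is the symmetric difference of a set with itself.
-/

section Shift

lemma zero_notMem_shift (S : Set ℕ) : 0 ∉ shift S := by
  simp [shift]

lemma succ_mem_shift_iff {S : Set ℕ} {m : ℕ} : m + 1 ∈ shift S ↔ m ∈ S := by
  simp [shift]

end Shift

section Stretch

variable {A : Set ℕ} {m n : ℕ}

lemma stretch_of_notMem (hn : n ∉ A) : stretch A n = 0 := by
  rw [stretch, if_neg hn]

lemma mem_of_odd_stretch (h : Odd (stretch A n)) : n ∈ A := by
  by_contra hn
  rw [stretch_of_notMem hn] at h
  exact Nat.not_odd_zero h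

lemma stretch_eq_of_isGreatest {k : ℕ} (hn : n ∈ A)
    (hk : IsGreatest {k | k ≤ n ∧ Set.Icc (n - k) n ⊆ A} k) : stretch A n = k + 1 := by
  rw [stretch, if_pos hn, hk.csSup_eq]

lemma stretch_zero_of_mem (h : 0 ∈ A) : stretch A 0 = 1 :=
  stretch_eq_of_isGreatest h ⟨⟨le_rfl, by simpa using h⟩, fun _ hk ↦ hk.1⟩

lemma stretch_succ_of_mem (h : m + 1 ∈ A) : stretch A (m + 1) = stretch A m + 1 := by
  by_cases hm : m ∈ A
  · set S := {k | k ≤ m ∧ Set.Icc (m - k) m ⊆ A}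
    have hS : BddAbove S := ⟨m, fun _ hk ↦ hk.1⟩
    have hkS : sSup S ∈ S := Nat.sSup_mem ⟨0, Nat.zero_le _, by simpa using hm⟩ hS
    rw [stretch_eq_of_isGreatest hm ⟨hkS, fun _ hk ↦ le_csSup hS hk⟩]
    refine stretch_eq_of_isGreatest h ⟨⟨Nat.succ_le_succ hkS.1, fun x hx ↦ ?_⟩, ?_⟩
    · rcases Nat.lt_or_ge x (m + 1) with hxm | hxm
      · exact hkS.2 ⟨by have := hx.1; omega, by omega⟩
      · rwa [le_antisymm hx.2 hxm]
    · rintro (_ | j) ⟨hj, hjA⟩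
      · exact Nat.zero_le _
      · have hjS : j ∈ S :=
          ⟨by omega, fun x hx ↦ hjA ⟨by have := hx.1; omega, by have := hx.2; omega⟩⟩
        exact Nat.succ_le_succ (le_csSup hS hjS)
  · rw [stretch_of_notMem hm]
    refine stretch_eq_of_isGreatest h ⟨⟨Nat.zero_le _, by simpa using h⟩, ?_⟩
    rintro k ⟨hk, hkA⟩
    by_contra hk0
    exact hm (hkA ⟨by omega, by omega⟩)

end Stretch

section Inverse

variable {A : Set ℕ} {m n : ℕ}

lemma mem_inv'_iff_of_mem (hn : n ∈ A) : n ∈ inv' A ↔ Odd (stretch A n) := by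
  simp [inv', hn]

lemma mem_inv'_iff_of_notMem (hn : n ∉ A) :
    n ∈ inv' A ↔ 0 < n ∧ Odd (stretch A (n - 1)) := by
  simp [inv', hn]

lemma mem_inter_inv'_iff : n ∈ A ∩ inv' A ↔ Odd (stretch A n) :=
  ⟨fun h ↦ (mem_inv'_iff_of_mem h.1).1 h.2,
    fun h ↦ ⟨mem_of_odd_stretch h, (mem_inv'_iff_of_mem (mem_of_odd_stretch h)).2 h⟩⟩

lemma zero_notMem_symmDiff_inv' : 0 ∉ A ∆ inv' A := by
  by_cases h : 0 ∈ A
  · simp [Set.mem_symmDiff, h, mem_inv'_iff_of_mem h, stretch_zero_of_mem h]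
  · simp [Set.mem_symmDiff, h, mem_inv'_iff_of_notMem h]

lemma succ_mem_symmDiff_inv'_iff : m + 1 ∈ A ∆ inv' A ↔ Odd (stretch A m) := by
  by_cases h : m + 1 ∈ A
  · simp [Set.mem_symmDiff, h, mem_inv'_iff_of_mem h, stretch_succ_of_mem h, Nat.odd_add_one]
  · simp [Set.mem_symmDiff, h, mem_inv'_iff_of_notMem h]

lemma symmDiff_inv'_eq_shift_inter (A : Set ℕ) : A ∆ inv' A = shift (A ∩ inv' A) := by
  ext (_ | m)
  · simp only [zero_notMem_symmDiff_inv', zero_notMem_shift]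
  · rw [succ_mem_symmDiff_inv'_iff, succ_mem_shift_iff, mem_inter_inv'_iff]

end Inverse

theorem stmt12 : ∀ A : Set ℕ, A.Nonempty → kplus A (inv' A) = ∅ := by
  intro A _
  rw [kplus, symmDiff_inv'_eq_shift_inter, symmDiff_self]
  rfl
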